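/- For all integers k ≥ 1, 1 ≤ q ≤ k, and n ≥ 0, the image of σ_{2q}(x₁,…,x_{6k+n−1})² in the quotient ring F₂[x₁,…,x_{6k+n−1}]/I(6k+n) is nonzero. -/

import Mathlib

open MvPolynomial

/-- The Lee–Szczarba ideal `I(n)` of `F₂[x₁,…,x_{n−1}]`, generated by
`xᵢ² + xᵢ·xᵢ₊₁` for `1 ≤ i ≤ n−2` together with `x_{n−1}²`.  Here `m = n − 1` is the
number of variables, and the variable `x_{i+1}` (1-based) is `X i` for `i : Fin m`. -/
noncomputable def lsIdeal (m : ℕ) : Ideal (MvPolynomial (Fin m) (ZMod 2)) :=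
  Ideal.span
    ({q | ∃ i j : Fin m, (j : ℕ) = (i : ℕ) + 1 ∧ q = X i ^ 2 + X i * X j} ∪
     {q | ∃ i : Fin m, (i : ℕ) = m - 1 ∧ q = X i ^ 2})

namespace LS

/-- carry of the chip-moving process -/
def car (b : ℕ → ℕ) : ℕ → ℕ
  | 0 => 0
  | t + 1 => car b t + b t - 1

/-- goodness: no overflow, and occupied set is exactly `{u | u % 3 ≤ 1 ∧ u < 6q}`. -/
def isGood (m q : ℕ) (b : ℕ → ℕ) : Prop :=
  car b m = 0 ∧ ∀ u, u < m → (0 < car b u + b u ↔ (u % 3 ≤ 1 ∧ u < 6 * q))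

lemma car_succ (b : ℕ → ℕ) (t : ℕ) : car b (t + 1) = car b t + b t - 1 := rfl

lemma car_congr {b b' : ℕ → ℕ} : ∀ {x : ℕ}, (∀ u, u < x → b u = b' u) → car b x = car b' x
  | 0, _ => rfl
  | x + 1, h => by
      show car _ x + _ - 1 = car _ x + _ - 1
      rw [car_congr (fun u hu => h u (by omega)), h x (by omega)]

lemma car_congr_from {b b' : ℕ → ℕ} {x : ℕ} (h : car b x = car b' x)
    (h2 : ∀ u, x ≤ u → b u = b' u) : ∀ y, x ≤ y → car b y = car b' y := by
  intro y hy
  induction y with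
  | zero =>
      have : x = 0 := by omega
      rw [← this]; exact h
  | succ t ih =>
      rcases Nat.lt_or_ge x (t+1) with hlt | hge
      · have ht : x ≤ t := by omega
        show car _ t + _ - 1 = car _ t + _ - 1
        rw [ih ht, h2 t ht]
      · have : x = t + 1 := by omega
        rw [← this]; exact h

lemma isGood_shift (m q : ℕ) (a : ℕ → ℕ) (i : ℕ) (him : i + 1 < m) :
    isGood m q (fun u => a u + if u = i then 2 else 0)
      ↔ isGood m q (fun u => (a u + if u = i then 1 else 0) + if u = i + 1 then 1 else 0) := by
  set b : ℕ → ℕ := fun u => a u + if u = i then 2 else 0 with hb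
  set b' : ℕ → ℕ := fun u => (a u + if u = i then 1 else 0) + if u = i + 1 then 1 else 0 with hb'
  have hbv : ∀ u, u ≠ i → u ≠ i + 1 → b u = b' u := by
    intro u h1 h2; simp [hb, hb', if_neg h1, if_neg h2]
  have hbi : b i = a i + 2 := by simp [hb]
  have hbi' : b' i = a i + 1 := by simp [hb']
  have hbj : b (i+1) = a (i+1) := by simp [hb]
  have hbj' : b' (i+1) = a (i+1) + 1 := by simp [hb']
  have hlo : ∀ u, u ≤ i → car b u = car b' u := by
    intro u hu
    exact car_congr (fun v hv => hbv v (by omega) (by omega))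
  have h1 : car b (i+1) = car b' (i+1) + 1 := by
    rw [car_succ, car_succ, hbi, hbi', hlo i le_rfl]; omega
  have h2 : car b (i+2) = car b' (i+2) := by
    have e1 : car b (i+2) = car b (i+1) + b (i+1) - 1 := car_succ b (i+1)
    have e2 : car b' (i+2) = car b' (i+1) + b' (i+1) - 1 := car_succ b' (i+1)
    rw [e1, e2, hbj, hbj', h1]; omega
  have hhi : ∀ y, i + 2 ≤ y → car b y = car b' y :=
    car_congr_from h2 (fun u hu => hbv u (by omega) (by omega))
  have hocc : ∀ u, (0 < car b u + b u ↔ 0 < car b' u + b' u) := by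
    intro u
    by_cases hui : u = i
    · subst hui; rw [hlo u le_rfl, hbi, hbi']; omega
    by_cases huj : u = i + 1
    · subst huj; rw [hbj, hbj', h1]; omega
    rcases Nat.lt_or_ge u i with h | h
    · rw [hlo u (by omega), hbv u hui huj]
    · rw [hhi u (by omega), hbv u hui huj]
  have hcm : car b m = car b' m := hhi m (by omega)
  constructor
  · rintro ⟨hc, ho⟩
    exact ⟨by rw [← hcm]; exact hc, fun u hu => (hocc u).symm.trans (ho u hu)⟩
  · rintro ⟨hc, ho⟩
    exact ⟨by rw [hcm]; exact hc, fun u hu => (hocc u).trans (ho u hu)⟩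

lemma isGood_top (m q : ℕ) (a : ℕ → ℕ) (hm : 0 < m) :
    ¬ isGood m q (fun u => a u + if u = m - 1 then 2 else 0) := by
  rintro ⟨hc, -⟩
  set b : ℕ → ℕ := fun u => a u + if u = m - 1 then 2 else 0 with hb
  have hbm : b (m-1) = a (m-1) + 2 := by simp [hb]
  have hmm : m = (m - 1) + 1 := by omega
  rw [hmm] at hc
  simp only [car] at hc
  omega

/-- target set of occupied positions' left endpoints -/
def Mset (q : ℕ) : Finset ℕ := (Finset.range (6 * q)).filter (fun u => u % 3 = 0)

lemma mem_Mset {q u : ℕ} : u ∈ Mset q ↔ u < 6 * q ∧ u % 3 = 0 := by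
  simp [Mset]

lemma card_filter_mod3 : ∀ x : ℕ, ((Finset.range x).filter (fun u => u % 3 = 0)).card = (x + 2) / 3
  | 0 => by simp
  | x + 1 => by
      rw [Finset.range_add_one, Finset.filter_insert]
      by_cases h : x % 3 = 0
      · rw [if_pos h, Finset.card_insert_of_notMem (by simp)]
        rw [card_filter_mod3 x]; omega
      · rw [if_neg h, card_filter_mod3 x]; omega

lemma card_Mset (q : ℕ) : (Mset q).card = 2 * q := by
  rw [Mset, card_filter_mod3]; omega

/-- number of elements of `{u | u % 3 ≤ 1 ∧ u < 6q}` below `x` -/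
def Fcl (q x : ℕ) : ℕ := if x ≤ 6 * q then x - x / 3 else 4 * q

lemma card_occ_pattern (q : ℕ) :
    ∀ x : ℕ, ((Finset.range x).filter (fun u => u % 3 ≤ 1 ∧ u < 6 * q)).card = Fcl q x
  | 0 => by simp [Fcl]
  | x + 1 => by
      rw [Finset.range_add_one, Finset.filter_insert]
      by_cases h : x % 3 ≤ 1 ∧ x < 6 * q
      · rw [if_pos h, Finset.card_insert_of_notMem (by simp), card_occ_pattern q x]
        simp only [Fcl]; split_ifs <;> omega
      · rw [if_neg h, card_occ_pattern q x]
        simp only [Fcl]; split_ifs <;> omega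

lemma conserv (b : ℕ → ℕ) :
    ∀ x : ℕ, (∑ u ∈ Finset.range x, b u)
      = ((Finset.range x).filter (fun u => 0 < car b u + b u)).card + car b x
  | 0 => by simp [car]
  | x + 1 => by
      rw [Finset.sum_range_succ, Finset.range_add_one, Finset.filter_insert, conserv b x, car_succ]
      by_cases h : 0 < car b x + b x
      · rw [if_pos h, Finset.card_insert_of_notMem (by simp)]; omega
      · rw [if_neg h]; omega

lemma car_astar (q : ℕ) :
    ∀ u : ℕ, car (fun v => if v % 3 = 0 ∧ v < 6 * q then 2 else 0) u
      = if u % 3 = 1 ∧ u < 6 * q then 1 else 0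
  | 0 => by simp [car]
  | u + 1 => by
      rw [car_succ, car_astar q u]
      split_ifs <;> omega

lemma isGood_Mset (m q : ℕ) (hq : 1 ≤ q) (hmq : 6 * q ≤ m + 1) :
    isGood m q (fun u => if u ∈ Mset q then 2 else 0) := by
  have hfun : (fun u => if u ∈ Mset q then 2 else 0)
      = (fun v => if v % 3 = 0 ∧ v < 6 * q then 2 else 0) := by
    funext v
    by_cases h : v < 6 * q ∧ v % 3 = 0
    · rw [if_pos (mem_Mset.mpr h), if_pos ⟨h.2, h.1⟩]
    · rw [if_neg (fun hc => h (mem_Mset.mp hc)), if_neg (fun hc => h ⟨hc.2, hc.1⟩)]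
  rw [hfun]
  constructor
  · rw [car_astar]; split_ifs with h <;> omega
  · intro u hu
    rw [car_astar]; beta_reduce; split_ifs <;> omega

/-- Main combinatorial lemma: the indicator-2 exponent function of `T` is good iff `T = Mset q`. -/
lemma good_iff (m q : ℕ) (hq : 1 ≤ q) (hmq : 6 * q ≤ m + 1) (T : Finset ℕ)
    (hTcard : T.card = 2 * q) :
    isGood m q (fun u => if u ∈ T then 2 else 0) ↔ T = Mset q := by
  constructor
  · intro hg
    set b : ℕ → ℕ := fun u => if u ∈ T then 2 else 0 with hbdef
    set cnt : ℕ → ℕ := fun x => ((Finset.range x) ∩ T).card with hcnt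
    have hsum : ∀ x, (∑ u ∈ Finset.range x, b u) = 2 * cnt x := by
      intro x
      rw [hcnt, hbdef]
      rw [Finset.sum_ite_mem, Finset.sum_const, smul_eq_mul, mul_comm]
    have hE : ∀ x, x ≤ m → 2 * cnt x = Fcl q x + car b x := by
      intro x hx
      have h1 := conserv b x
      rw [hsum x] at h1
      rw [h1]
      congr 1
      rw [← card_occ_pattern q x]
      congr 1
      apply Finset.filter_congr
      intro u hu
      have hum : u < m := lt_of_lt_of_le (Finset.mem_range.mp hu) hx
      simpa using hg.2 u hum
    have hcnt_succ : ∀ x, cnt (x + 1) = cnt x + (if x ∈ T then 1 else 0) := by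
      intro x
      rw [hcnt]
      simp only [Finset.range_add_one]
      by_cases h : x ∈ T
      · rw [Finset.insert_inter_of_mem h, if_pos h,
          Finset.card_insert_of_notMem (by simp)]
      · rw [Finset.insert_inter_of_notMem h, if_neg h, add_zero]
    -- occupancy info at positions below m
    have hocc : ∀ u, u < m → ¬(u % 3 ≤ 1 ∧ u < 6 * q) → (car b u = 0 ∧ u ∉ T) := by
      intro u hum hno
      have := (hg.2 u hum)
      have h0 : ¬ (0 < car b u + b u) := fun hp => hno (this.mp hp)
      have hb0 : b u = 0 := by omega
      refine ⟨by omega, ?_⟩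
      intro hu
      rw [hbdef] at hb0
      simp [hu] at hb0
    -- main induction
    have hB : ∀ j, j < 2 * q → cnt (3 * j) = j ∧ 3 * j ∈ T ∧ cnt (3 * j + 2) = j + 1 ∧
        (3 * j + 2 < m → 3 * j + 2 ∉ T) := by
      intro j
      induction j with
      | zero =>
          intro _
          norm_num
          have hc0 : cnt 0 = 0 := by simp [hcnt]
          have h1 : cnt 1 = if 0 ∈ T then 1 else 0 := by rw [hcnt_succ 0, hc0, zero_add]
          have hmem : (0:ℕ) ∈ T := by
            by_contra h0
            have hE1 : 2 * cnt 1 = Fcl q 1 + car b 1 := hE 1 (by omega)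
            have hF1 : Fcl q 1 = 1 := by simp only [Fcl]; split_ifs <;> omega
            rw [h1, if_neg h0, hF1] at hE1
            omega
          have hc1 : cnt 1 = 1 := by rw [h1, if_pos hmem]
          by_cases hc : (2:ℕ) < m
          · obtain ⟨hcar0, hnotT⟩ := hocc 2 hc (by omega)
            have hEx := hE 2 (by omega)
            have hF : Fcl q 2 = 2 := by simp only [Fcl]; split_ifs <;> omega
            exact ⟨hc0, hmem, by omega, fun _ => hnotT⟩
          · have hm' : (2:ℕ) = m := by omega
            have hEx := hE m le_rfl
            have hF : Fcl q m = 2 := by simp only [Fcl]; split_ifs <;> omega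
            rw [hg.1, hF] at hEx
            rw [← hm'] at hEx
            exact ⟨hc0, hmem, by omega, fun h => absurd h (by omega)⟩
      | succ j ih =>
          intro hj
          obtain ⟨hc3j, hmemj, hc3j2, hnotj⟩ := ih (by omega)
          have hnot2 : 3 * j + 2 ∉ T := hnotj (by omega)
          have hcJ : cnt (3 * (j+1)) = j + 1 := by
            have h := hcnt_succ (3*j+2)
            rw [if_neg hnot2, add_zero, hc3j2] at h
            have heq : 3 * (j+1) = 3*j+2+1 := by omega
            rw [heq, h]
          have hmem : 3 * (j+1) ∈ T := by
            by_contra h0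
            have h1 : cnt (3*(j+1)+1) = j + 1 := by
              rw [hcnt_succ, if_neg h0, add_zero, hcJ]
            have hEx := hE (3*(j+1)+1) (by omega)
            have hF : Fcl q (3*(j+1)+1) = 2*(j+1)+1 := by
              simp only [Fcl]; split_ifs <;> omega
            rw [h1, hF] at hEx
            omega
          by_cases hc : 3*(j+1)+2 < m
          · obtain ⟨hcar0, hnotT⟩ := hocc (3*(j+1)+2) hc (by omega)
            have hEx := hE (3*(j+1)+2) (by omega)
            have hF : Fcl q (3*(j+1)+2) = 2*(j+1)+2 := by
              simp only [Fcl]; split_ifs <;> omega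
            exact ⟨hcJ, hmem, by omega, fun _ => hnotT⟩
          · have hm' : 3*(j+1)+2 = m := by omega
            have hEx := hE m le_rfl
            have hF : Fcl q m = 2*(j+1)+2 := by
              simp only [Fcl]; split_ifs <;> omega
            rw [hg.1, hF, ← hm'] at hEx
            refine ⟨hcJ, hmem, by omega, fun h => absurd h (by omega)⟩
    have hsub : Mset q ⊆ T := by
      intro u hu
      obtain ⟨h6, h3⟩ := mem_Mset.mp hu
      have hmemu := (hB (u/3) (by omega)).2.1
      have heq : 3 * (u/3) = u := by omega
      rwa [heq] at hmemu
    exact (Finset.eq_of_subset_of_card_le hsub (by rw [hTcard, card_Mset])).symm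
  · intro h; rw [h]; exact isGood_Mset m q hq hmq

/-! ### The linear functional -/

def toFun (m : ℕ) (d : Fin m →₀ ℕ) : ℕ → ℕ := fun u => if h : u < m then d ⟨u, h⟩ else 0

open Classical in
noncomputable def wt (m q : ℕ) (d : Fin m →₀ ℕ) : ZMod 2 :=
  if isGood m q (toFun m d) then 1 else 0

noncomputable def phi (m q : ℕ) : MvPolynomial (Fin m) (ZMod 2) →+ ZMod 2 :=
  (Finsupp.liftAddHom fun d => AddMonoidHom.mulRight (wt m q d)).comp
    AddMonoidAlgebra.coeffAddEquiv.toAddMonoidHom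

lemma phi_monomial (m q : ℕ) (d : Fin m →₀ ℕ) (c : ZMod 2) :
    phi m q (monomial d c) = c * wt m q d := by
  rw [← single_eq_monomial]
  exact Finsupp.liftAddHom_apply_single (fun d => AddMonoidHom.mulRight (wt m q d)) d c

lemma toFun_add (m : ℕ) (d e : Fin m →₀ ℕ) :
    toFun m (d + e) = fun u => toFun m d u + toFun m e u := by
  funext u
  unfold toFun
  by_cases h : u < m
  · rw [dif_pos h, dif_pos h, dif_pos h, Finsupp.add_apply]
  · rw [dif_neg h, dif_neg h, dif_neg h]

lemma toFun_single (m : ℕ) (i : Fin m) (c : ℕ) :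
    toFun m (Finsupp.single i c) = fun u => if u = (i : ℕ) then c else 0 := by
  funext u
  unfold toFun
  by_cases h : u < m
  · rw [dif_pos h, Finsupp.single_apply]
    have hiff : (i = (⟨u, h⟩ : Fin m)) ↔ (u = (i : ℕ)) := by
      constructor
      · intro he; rw [he]
      · intro he; exact Fin.ext he.symm
    simp only [hiff]
  · rw [dif_neg h, if_neg]
    intro he
    exact h (by rw [he]; exact i.isLt)

lemma wt_shift (m q : ℕ) (d : Fin m →₀ ℕ) (i j : Fin m) (hij : (j : ℕ) = (i : ℕ) + 1) :
    wt m q (d + Finsupp.single i 2) = wt m q (d + (Finsupp.single i 1 + Finsupp.single j 1)) := by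
  classical
  have h1 : toFun m (d + Finsupp.single i 2)
      = fun u => toFun m d u + if u = (i : ℕ) then 2 else 0 := by
    funext u
    simp only [toFun_add, toFun_single]
  have h2 : toFun m (d + (Finsupp.single i 1 + Finsupp.single j 1))
      = fun u => (toFun m d u + if u = (i : ℕ) then 1 else 0) +
          if u = (i : ℕ) + 1 then 1 else 0 := by
    funext u
    simp only [toFun_add, toFun_single, hij]
    split_ifs <;> omega
  rw [wt, wt, h1, h2]
  exact if_congr (isGood_shift m q (toFun m d) (i : ℕ) (hij ▸ j.isLt)) rfl rfl

lemma wt_top (m q : ℕ) (d : Fin m →₀ ℕ) (i : Fin m) (hi : (i : ℕ) = m - 1) :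
    wt m q (d + Finsupp.single i 2) = 0 := by
  classical
  have h1 : toFun m (d + Finsupp.single i 2)
      = fun u => toFun m d u + if u = m - 1 then 2 else 0 := by
    funext u
    simp only [toFun_add, toFun_single, hi]
  rw [wt, h1]
  rw [if_neg (isGood_top m q (toFun m d) (lt_of_le_of_lt (Nat.zero_le _) i.isLt))]

lemma phi_gen1 (m q : ℕ) (r : MvPolynomial (Fin m) (ZMod 2)) (i j : Fin m)
    (hij : (j : ℕ) = (i : ℕ) + 1) : phi m q (r * (X i ^ 2 + X i * X j)) = 0 := by
  induction r using MvPolynomial.induction_on' with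
  | monomial d c =>
      have eX : (X i * X j : MvPolynomial (Fin m) (ZMod 2))
          = monomial (Finsupp.single i 1 + Finsupp.single j 1) 1 := by
        rw [X, X, monomial_mul, one_mul]
      have e1 : (monomial d c : MvPolynomial (Fin m) (ZMod 2)) * (X i ^ 2 + X i * X j)
          = monomial (d + Finsupp.single i 2) c
            + monomial (d + (Finsupp.single i 1 + Finsupp.single j 1)) c := by
        rw [mul_add, X_pow_eq_monomial, eX, monomial_mul, monomial_mul, mul_one]
      rw [e1, map_add, phi_monomial, phi_monomial, wt_shift m q d i j hij]
      have hz : ∀ z : ZMod 2, z + z = 0 := by decide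
      exact hz _
  | add p p' hp hp' => rw [add_mul, map_add, hp, hp', add_zero]

lemma phi_gen2 (m q : ℕ) (r : MvPolynomial (Fin m) (ZMod 2)) (i : Fin m)
    (hi : (i : ℕ) = m - 1) : phi m q (r * X i ^ 2) = 0 := by
  induction r using MvPolynomial.induction_on' with
  | monomial d c =>
      have e1 : (monomial d c : MvPolynomial (Fin m) (ZMod 2)) * X i ^ 2
          = monomial (d + Finsupp.single i 2) c := by
        rw [X_pow_eq_monomial, monomial_mul, mul_one]
      rw [e1, phi_monomial, wt_top m q d i hi, mul_zero]
  | add p p' hp hp' => rw [add_mul, map_add, hp, hp', add_zero]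

lemma phi_ker (m q : ℕ) (x : MvPolynomial (Fin m) (ZMod 2)) (hx : x ∈ lsIdeal m) :
    phi m q x = 0 := by
  have key : ∀ r, phi m q (r * x) = 0 := by
    induction hx using Submodule.span_induction with
    | mem y hy =>
        intro r
        rcases hy with ⟨i, j, hij, rfl⟩ | ⟨i, hi, rfl⟩
        · exact phi_gen1 m q r i j hij
        · exact phi_gen2 m q r i hi
    | zero => intro r; rw [mul_zero, map_zero]
    | add a b _ _ hA hB => intro r; rw [mul_add, map_add, hA r, hB r, add_zero]
    | smul a y _ hA => intro r; rw [smul_eq_mul, ← mul_assoc]; exact hA (r * a)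
  have := key 1
  rwa [one_mul] at this

/-! ### Evaluating `φ` on `esymm (2q) ^ 2` -/

lemma toFun_double (m : ℕ) (t : Finset (Fin m)) :
    toFun m ((∑ i ∈ t, Finsupp.single i 1) + (∑ i ∈ t, Finsupp.single i 1))
      = fun u => if u ∈ t.image Fin.val then 2 else 0 := by
  funext u
  have hmem : ∀ h : u < m, (((⟨u, h⟩ : Fin m) ∈ t) ↔ u ∈ t.image Fin.val) := by
    intro h
    constructor
    · intro hin; exact Finset.mem_image_of_mem _ hin
    · intro hin
      obtain ⟨a, ha, hav⟩ := Finset.mem_image.mp hin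
      have : a = (⟨u, h⟩ : Fin m) := Fin.ext hav
      rwa [← this]
  unfold toFun
  by_cases h : u < m
  · rw [dif_pos h, Finsupp.add_apply]
    have happ : (∑ i ∈ t, Finsupp.single i (1:ℕ)) ⟨u, h⟩
        = if (⟨u, h⟩ : Fin m) ∈ t then 1 else 0 := by
      rw [Finsupp.finset_sum_apply]
      simp [Finsupp.single_apply]
    rw [happ]
    by_cases hin : (⟨u, h⟩ : Fin m) ∈ t
    · rw [if_pos hin, if_pos ((hmem h).mp hin)]
    · rw [if_neg hin, if_neg (fun hc => hin ((hmem h).mpr hc))]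
  · rw [dif_neg h, if_neg]
    intro hc
    obtain ⟨a, _, hav⟩ := Finset.mem_image.mp hc
    exact h (hav ▸ a.isLt)

lemma main (m q : ℕ) (hq : 1 ≤ q) (hmq : 6 * q ≤ m + 1) :
    (esymm (Fin m) (ZMod 2) (2 * q)) ^ 2 ∉ lsIdeal m := by
  classical
  intro hmem
  have h0 : phi m q ((esymm (Fin m) (ZMod 2) (2 * q)) ^ 2) = 0 := phi_ker m q _ hmem
  -- the witness subset
  set tstar : Finset (Fin m) := Finset.univ.filter (fun i => (i : ℕ) ∈ Mset q) with htstar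
  have himst : tstar.image Fin.val = Mset q := by
    ext u
    simp only [htstar, Finset.mem_image, Finset.mem_filter, Finset.mem_univ, true_and]
    constructor
    · rintro ⟨a, ha, rfl⟩; exact ha
    · intro hu
      obtain ⟨h6, h3⟩ := mem_Mset.mp hu
      exact ⟨⟨u, by omega⟩, hu, rfl⟩
  have hcs : tstar.card = 2 * q := by
    rw [← card_Mset q, ← himst, Finset.card_image_of_injective _ Fin.val_injective]
  have hsummand : ∀ t : Finset (Fin m), t.card = 2 * q →
      phi m q ((monomial (∑ i ∈ t, Finsupp.single i 1) (1 : ZMod 2)) ^ 2)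
        = (if t.image Fin.val = Mset q then 1 else 0) := by
    intro t ht
    have hmon : (monomial (∑ i ∈ t, Finsupp.single i 1) (1 : ZMod 2)) ^ 2
        = monomial ((∑ i ∈ t, Finsupp.single i 1) + (∑ i ∈ t, Finsupp.single i 1)) 1 := by
      rw [pow_two, monomial_mul, one_mul]
    rw [hmon, phi_monomial, one_mul, wt, toFun_double]
    exact if_congr (good_iff m q hq hmq _
      (by rw [Finset.card_image_of_injective _ Fin.val_injective, ht])) rfl rfl
  have h1 : phi m q ((esymm (Fin m) (ZMod 2) (2 * q)) ^ 2) = 1 := by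
    rw [esymm_eq_sum_monomial, sum_pow_char, map_sum]
    rw [Finset.sum_congr rfl
      (fun t ht => hsummand t (Finset.mem_powersetCard_univ.mp ht))]
    rw [Finset.sum_eq_single tstar]
    · rw [if_pos himst]
    · intro b _ hbne
      rw [if_neg]
      intro heq
      apply hbne
      ext i
      have h1 : i ∈ b ↔ (i : ℕ) ∈ b.image Fin.val := by
        constructor
        · exact fun h => Finset.mem_image_of_mem _ h
        · intro h
          obtain ⟨a, ha, hav⟩ := Finset.mem_image.mp h
          rwa [Fin.ext hav] at ha
      have h2 : i ∈ tstar ↔ (i : ℕ) ∈ Mset q := by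
        simp [htstar]
      rw [h1, heq, h2]
    · intro habs
      exact absurd (Finset.mem_powersetCard_univ.mpr hcs) habs
  rw [h0] at h1
  exact one_ne_zero h1.symm

end LS

/-- For all `k ≥ 1`, `1 ≤ q ≤ k` and `n ≥ 0`, the image of
`σ_{2q}(x₁,…,x_{6k+n−1})²` in `F₂[x₁,…,x_{6k+n−1}]/I(6k+n)` is nonzero. -/
theorem stmt12 (k q n : ℕ) (hk : 1 ≤ k) (hq1 : 1 ≤ q) (hq2 : q ≤ k) :
    Ideal.Quotient.mk (lsIdeal (6 * k + n - 1))
      (esymm (Fin (6 * k + n - 1)) (ZMod 2) (2 * q) ^ 2) ≠ 0 := by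
  have hmq : 6 * q ≤ (6 * k + n - 1) + 1 := by omega
  rw [Ne, Ideal.Quotient.eq_zero_iff_mem]
  exact LS.main (6 * k + n - 1) q hq1 hmq
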